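/- arXiv:1306.1061 — 4 statements merged into one kernel-verified Lean document; each statement's English description precedes it below -/
import Mathlib

section
/- Let E be a field, V an E-vector space of finite dimension n ≥ 1, B an E-linear endomorphism of V, u ∈ V, and v ∈ V* a linear form on V. Define the n×n matrix M over E by M_{ij} = v(B^{i+j}(u)) for 0 ≤ i, j ≤ n−1. Then M is invertible if and only if (u, Bu, …, B^{n−1}u) is a basis of V and (v, v∘B, …, v∘B^{n−1}) is a basis of the dual space V*. -/
/-- Proposition 2.2, condition 1): the Hankel-type matrix `M = (v(B^{i+j} u))` is invertible
iff `(u, Bu, …, B^{n-1}u)` is a basis of `V` and `(v, v∘B, …, v∘B^{n-1})` is a basis of `V*`. -/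
theorem stmt_2 (E V : Type*) [Field E] [AddCommGroup V] [Module E V]
    [FiniteDimensional E V] (n : ℕ) (hn : 1 ≤ n) (hdim : Module.finrank E V = n)
    (B : V →ₗ[E] V) (u : V) (v : Module.Dual E V)
    (M : Matrix (Fin n) (Fin n) E)
    (hM : ∀ i j : Fin n, M i j = v ((B ^ ((i : ℕ) + (j : ℕ))) u)) :
    IsUnit M ↔
      ((LinearIndependent E (fun i : Fin n => (B ^ (i : ℕ)) u) ∧
        Submodule.span E (Set.range fun i : Fin n => (B ^ (i : ℕ)) u) = ⊤) ∧
       (LinearIndependent E (fun i : Fin n => v ∘ₗ (B ^ (i : ℕ))) ∧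
        Submodule.span E (Set.range fun i : Fin n => v ∘ₗ (B ^ (i : ℕ))) = ⊤)) := by
  classical
  let b : Module.Basis (Fin n) E V := Module.finBasisOfFinrankEq E V hdim
  set X := b.toMatrix (fun j : Fin n => (B ^ (j : ℕ)) u) with hX
  set Y := b.dualBasis.toMatrix (fun i : Fin n => v ∘ₗ (B ^ (i : ℕ))) with hY
  have hfact : M = Y.transpose * X := by
    ext i j
    rw [hM]
    have h1 : v ((B ^ ((i : ℕ) + (j : ℕ))) u) = (v ∘ₗ (B ^ (i : ℕ))) ((B ^ (j : ℕ)) u) := by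
      simp [pow_add, Module.End.mul_apply]
    rw [h1]
    have h2 : (B ^ (j : ℕ)) u = ∑ k, b.repr ((B ^ (j : ℕ)) u) k • b k :=
      (b.sum_repr _).symm
    rw [h2, map_sum]
    simp [Matrix.mul_apply, Matrix.transpose_apply, hX, hY, Module.Basis.toMatrix,
      Module.Basis.dualBasis_repr, mul_comm]
  rw [hfact, Matrix.isUnit_iff_isUnit_det, Matrix.det_mul, Matrix.det_transpose,
    IsUnit.mul_iff]
  rw [← Module.Basis.det_apply, ← Module.Basis.det_apply, ← Module.Basis.is_basis_iff_det, ← Module.Basis.is_basis_iff_det]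
  tauto
end

section
/- Let E be a field, V an E-vector space of finite dimension n ≥ 1, B an E-linear endomorphism of V, u ∈ V, and v ∈ V* a linear form on V. Assume the n×n matrix M with entries M_{ij} = v(B^{i+j}(u)), 0 ≤ i, j ≤ n−1, is invertible. Then every E-linear automorphism g of V satisfying g∘B∘g⁻¹ = B, g(u) = u and v∘g⁻¹ = v is the identity. -/
/-- Proposition 2.2, implication 1) ⇒ 2): if the Hankel-type matrix `M = (v(B^{i+j} u))` is
invertible, then the stabilizer of `(B, u, v)` in `GL(V)` is trivial. -/
theorem stmt_3 (E V : Type*) [Field E] [AddCommGroup V] [Module E V]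
    [FiniteDimensional E V] (n : ℕ) (hn : 1 ≤ n) (hdim : Module.finrank E V = n)
    (B : V →ₗ[E] V) (u : V) (v : Module.Dual E V)
    (M : Matrix (Fin n) (Fin n) E)
    (hM : ∀ i j : Fin n, M i j = v ((B ^ ((i : ℕ) + (j : ℕ))) u))
    (hMinv : IsUnit M)
    (g : V ≃ₗ[E] V)
    (hgB : ∀ x, g (B (g.symm x)) = B x)
    (hgu : g u = u)
    (hgv : ∀ x, v (g.symm x) = v x) :
    g = LinearEquiv.refl E V := by
  -- g commutes with B
  have hcomm : ∀ x, g (B x) = B (g x) := by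
    intro x
    have := hgB (g x)
    simpa using this
  -- g fixes every B^j u
  have hfix : ∀ j : ℕ, g ((B ^ j) u) = (B ^ j) u := by
    intro j
    induction j with
    | zero => simpa using hgu
    | succ k ih =>
      rw [pow_succ', Module.End.mul_apply, hcomm, ih]
  -- the family B^j u (j < n) is linearly independent
  have hli : LinearIndependent E (fun j : Fin n => (B ^ (j : ℕ)) u) := by
    rw [Fintype.linearIndependent_iff]
    intro c hc
    obtain ⟨N, hN⟩ : ∃ N : Matrix (Fin n) (Fin n) E, N * M = 1 := by
      obtain ⟨Mu, hMu⟩ := hMinv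
      exact ⟨↑Mu⁻¹, by rw [← hMu]; exact Mu.inv_mul⟩
    have hMc : M.mulVec c = 0 := by
      funext i
      have : v ((B ^ (i : ℕ)) (∑ j : Fin n, c j • (B ^ (j : ℕ)) u)) = 0 := by
        rw [hc]; simp
      simp only [map_sum, map_smul] at this
      calc M.mulVec c i = ∑ j, M i j * c j := rfl
        _ = ∑ j : Fin n, c j • v ((B ^ ((i : ℕ) + (j : ℕ))) u) := by
            refine Finset.sum_congr rfl fun j _ => ?_
            rw [hM i j]; ring_nf
        _ = 0 := by
            rw [← this]
            refine Finset.sum_congr rfl fun j _ => ?_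
            rw [pow_add, Module.End.mul_apply]
    intro i
    have : c = 0 := by
      have h1 : N.mulVec (M.mulVec c) = c := by
        rw [Matrix.mulVec_mulVec, hN, Matrix.one_mulVec]
      rw [hMc, Matrix.mulVec_zero] at h1
      exact h1.symm
    simp [this]
  -- they form a basis
  haveI : Nonempty (Fin n) := ⟨⟨0, hn⟩⟩
  have hcard : Fintype.card (Fin n) = Module.finrank E V := by simp [hdim]
  let b := basisOfLinearIndependentOfCardEqFinrank hli hcard
  have hb : ∀ j : Fin n, b j = (B ^ (j : ℕ)) u := fun j => by
    simp [b, coe_basisOfLinearIndependentOfCardEqFinrank]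
  apply LinearEquiv.toLinearMap_injective
  apply b.ext
  intro j
  simp [hb j, hfix]
end

section
/- Let m ≥ 1 and let d : Fin m → ℕ with d_i ≥ 1 for every i. Let n be a natural number with n > m·d_i for every i. Equip each ℝ^{d_i} with the sup norm ‖·‖_∞. Then there exists a constant C > 0 such that for every family t : Fin m → ℝ with t_i > 0 for all i, one has Σ_ξ (max_i t_i·‖ξ_i‖_∞)^{−n} ≤ C · ∏_{i} t_i^{−n/m}, where the sum runs over all ξ = (ξ_1, …, ξ_m) ∈ ∏_i ℤ^{d_i} such that ξ_i ≠ 0 for every i. -/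
lemma aux1 {s : ℝ} (hs : 1 < s) :
    Summable fun a : ℤ => (max 1 |(a : ℝ)|) ^ (-s) := by
  have hg := Real.summable_abs_int_rpow hs
  have hh : Summable (fun a : ℤ => if a = 0 then (1:ℝ) else 0) :=
    summable_of_ne_finset_zero (s := {0}) (fun b hb => by
      simp [Finset.mem_singleton] at hb; simp [hb])
  have := hg.add hh
  refine this.congr fun a => ?_
  rcases eq_or_ne a 0 with rfl | ha
  · simp [Real.zero_rpow (by linarith : -s ≠ 0)]
  · have h1 : (1:ℝ) ≤ |(a:ℝ)| := by
      rw [← Int.cast_abs]; exact_mod_cast Int.one_le_abs (by exact_mod_cast ha)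
    simp [ha, max_eq_right h1]



lemma keyineq {A B M s θ : ℝ} (hA1 : 1 ≤ A) (hB1 : 1 ≤ B) (hAM : A ≤ M) (hBM : B ≤ M)
    (hθ0 : 0 ≤ θ) (hθ1 : θ ≤ 1) (hs0 : 0 < s) :
    M ^ (-s) ≤ A ^ (-(s * θ)) * B ^ (-(s * (1 - θ))) := by
  have hA0 : (0:ℝ) ≤ A := by linarith
  have hB0 : (0:ℝ) ≤ B := by linarith
  have hM0 : (0:ℝ) ≤ M := by linarith
  have hkey : A ^ θ * B ^ (1 - θ) ≤ M := by
    calc A ^ θ * B ^ (1 - θ) ≤ M ^ θ * M ^ (1 - θ) :=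
          mul_le_mul (Real.rpow_le_rpow hA0 hAM hθ0)
            (Real.rpow_le_rpow hB0 hBM (by linarith))
            (Real.rpow_nonneg hB0 _) (Real.rpow_nonneg hM0 _)
      _ = M := by rw [← Real.rpow_add (by linarith)]; simp
  have hABpos : 0 < A ^ θ * B ^ (1 - θ) := by
    have := Real.rpow_pos_of_pos (lt_of_lt_of_le zero_lt_one hA1) θ
    have := Real.rpow_pos_of_pos (lt_of_lt_of_le zero_lt_one hB1) (1 - θ)
    positivity
  calc M ^ (-s) ≤ (A ^ θ * B ^ (1 - θ)) ^ (-s) :=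
        Real.rpow_le_rpow_of_nonpos hABpos hkey (by linarith)
    _ = A ^ (-(s * θ)) * B ^ (-(s * (1 - θ))) := by
        rw [Real.mul_rpow (Real.rpow_nonneg hA0 _) (Real.rpow_nonneg hB0 _),
          ← Real.rpow_mul hA0, ← Real.rpow_mul hB0]
        ring_nf

def eE (d : ℕ) : (Fin (d+1) → ℤ) ≃ ℤ × (Fin d → ℤ) :=
  ⟨fun x => (x 0, fun j => x j.succ), fun p => Fin.cons p.1 p.2,
    fun x => by funext j; exact Fin.cases rfl (fun i => rfl) j,
    fun p => rfl⟩

lemma aux2 : ∀ (d : ℕ) (s : ℝ), (d : ℝ) < s →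
    Summable fun x : Fin d → ℤ => (max 1 ‖(fun j => ((x j : ℤ) : ℝ))‖) ^ (-s) := by
  intro d
  induction d with
  | zero => intro s hs; exact Summable.of_finite
  | succ d ih =>
    intro s hs
    have hsd : (d:ℝ) + 1 < s := by push_cast at hs ⊢; linarith
    have hd0 : (0:ℝ) ≤ d := Nat.cast_nonneg d
    have hs0 : 0 < s := by linarith
    set θ : ℝ := (1 + (s - d)) / (2 * s) with hθdef
    have hsθ : s * θ = (1 + (s - d)) / 2 := by
      rw [hθdef]; field_simp
    have hθ0 : 0 ≤ θ := by apply div_nonneg <;> nlinarith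
    have hθ1 : θ ≤ 1 := by
      rw [div_le_one (by linarith)]; nlinarith
    have hs1 : 1 < s * θ := by rw [hsθ]; linarith
    have hs2 : (d : ℝ) < s * (1 - θ) := by
      rw [show s * (1 - θ) = s - s * θ by ring, hsθ]; linarith
    have h1 : Summable fun a : ℤ => (max 1 |(a : ℝ)|) ^ (-(s * θ)) := aux1 hs1
    have h2 : Summable fun y : Fin d → ℤ =>
        (max 1 ‖(fun j => ((y j : ℤ) : ℝ))‖) ^ (-(s * (1 - θ))) := ih _ hs2
    have hprod : Summable fun p : ℤ × (Fin d → ℤ) =>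
        (max 1 |(p.1 : ℝ)|) ^ (-(s * θ)) *
        (max 1 ‖(fun j => ((p.2 j : ℤ) : ℝ))‖) ^ (-(s * (1 - θ))) :=
      h1.mul_of_nonneg h2 (fun _ => Real.rpow_nonneg (le_trans zero_le_one (le_max_left _ _)) _)
        (fun _ => Real.rpow_nonneg (le_trans zero_le_one (le_max_left _ _)) _)
    have hcomp : Summable fun x : Fin (d+1) → ℤ =>
        (max 1 |((x 0 : ℤ) : ℝ)|) ^ (-(s * θ)) *
        (max 1 ‖(fun j : Fin d => ((x (Fin.succ j) : ℤ) : ℝ))‖) ^ (-(s * (1 - θ))) := by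
      have := ((eE d).summable_iff (f := fun p : ℤ × (Fin d → ℤ) =>
        (max 1 |(p.1 : ℝ)|) ^ (-(s * θ)) *
        (max 1 ‖(fun j => ((p.2 j : ℤ) : ℝ))‖) ^ (-(s * (1 - θ))))).2 hprod
      exact this.congr fun x => rfl
    refine hcomp.of_nonneg_of_le
      (fun x => Real.rpow_nonneg (le_trans zero_le_one (le_max_left _ _)) _) fun x => ?_
    refine keyineq (le_max_left _ _) (le_max_left _ _) ?_ ?_ hθ0 hθ1 hs0
    · apply max_le_max le_rfl
      exact (norm_le_pi_norm (fun j => ((x j : ℤ) : ℝ)) 0).trans_eq' (Real.norm_eq_abs _).symm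
    · apply max_le_max le_rfl
      apply (pi_norm_le_iff_of_nonneg (norm_nonneg _)).2
      intro j
      exact norm_le_pi_norm (fun j => ((x j : ℤ) : ℝ)) (Fin.succ j)


def eP (m : ℕ) (α : Fin (m+1) → Type) : (∀ i : Fin (m+1), α i) ≃ α 0 × (∀ i : Fin m, α i.succ) :=
  ⟨fun x => (x 0, fun j => x j.succ), fun p => Fin.cons p.1 p.2,
    fun x => by funext j; exact Fin.cases rfl (fun i => rfl) j,
    fun p => rfl⟩

set_option maxHeartbeats 1000000 in
lemma aux_pi : ∀ (m : ℕ) (α : Fin m → Type) (f : ∀ i, α i → ℝ),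
    (∀ i x, 0 ≤ f i x) → (∀ i, Summable (f i)) →
    Summable (fun x : ∀ i, α i => ∏ i, f i (x i)) ∧
      (∑' x : ∀ i, α i, ∏ i, f i (x i)) = ∏ i, ∑' y, f i y := by
  intro m
  induction m with
  | zero =>
    intro α f _ _
    constructor
    · exact Summable.of_finite
    · haveI : Unique (∀ i : Fin 0, α i) := ⟨⟨fun i => i.elim0⟩, fun x => funext fun i => i.elim0⟩
      rw [tsum_eq_single (default : ∀ i : Fin 0, α i) (fun b hb => absurd (Subsingleton.elim b default) hb)]
      simp
  | succ m ih =>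
    intro α f hpos hsum
    obtain ⟨ihS, ihT⟩ := ih (fun i => α i.succ) (fun i => f i.succ) (fun i x => hpos _ _)
      (fun i => hsum _)
    have hGsum : Summable (fun p : α 0 × (∀ i : Fin m, α i.succ) =>
        f 0 p.1 * ∏ i : Fin m, f i.succ (p.2 i)) := by
      apply Summable.mul_of_nonneg (hsum 0) ihS
      · exact fun x => hpos 0 x
      · exact fun y => Finset.prod_nonneg fun i _ => hpos _ _
    have hFG : ∀ x : ∀ i : Fin (m+1), α i,
        (∏ i, f i (x i)) = f 0 (x 0) * ∏ i : Fin m, f i.succ (x i.succ) := by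
      intro x
      rw [Fin.prod_univ_succ]
    have hSummF : Summable (fun x : ∀ i : Fin (m+1), α i => ∏ i, f i (x i)) := by
      have := ((eP m α).summable_iff (f := fun p : α 0 × (∀ i : Fin m, α i.succ) =>
        f 0 p.1 * ∏ i : Fin m, f i.succ (p.2 i))).2 hGsum
      exact this.congr fun x => (hFG x).symm
    refine ⟨hSummF, ?_⟩
    have h1 : (∑' x : ∀ i : Fin (m+1), α i, ∏ i, f i (x i)) =
        ∑' p : α 0 × (∀ i : Fin m, α i.succ), f 0 p.1 * ∏ i : Fin m, f i.succ (p.2 i) := by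
      rw [← (eP m α).tsum_eq]
      exact tsum_congr hFG
    have habs1 : Summable (fun y : α 0 => ‖f 0 y‖) :=
      (hsum 0).congr fun y => (Real.norm_of_nonneg (hpos 0 y)).symm
    have habs2 : Summable (fun y : ∀ i : Fin m, α i.succ => ‖∏ i, f i.succ (y i)‖) :=
      ihS.congr fun y =>
        (Real.norm_of_nonneg (Finset.prod_nonneg fun i _ => hpos _ _)).symm
    have h2 : (∑' p : α 0 × (∀ i : Fin m, α i.succ), f 0 p.1 * ∏ i : Fin m, f i.succ (p.2 i)) =
        (∑' y, f 0 y) * ∑' y : ∀ i : Fin m, α i.succ, ∏ i, f i.succ (y i) :=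
      (tsum_mul_tsum_of_summable_norm habs1 habs2).symm
    rw [h1, h2, ihT, Fin.prod_univ_succ]

lemma norm_ge_one {D : ℕ} {x : Fin D → ℤ} (hx : x ≠ 0) :
    (1 : ℝ) ≤ ‖(fun j => ((x j : ℤ) : ℝ))‖ := by
  obtain ⟨j, hj⟩ : ∃ j, x j ≠ 0 := by
    by_contra h
    push_neg at h
    exact hx (funext h)
  have h1 : (1 : ℝ) ≤ |((x j : ℤ) : ℝ)| := by
    rw [← Int.cast_abs]
    exact_mod_cast Int.one_le_abs hj
  calc (1:ℝ) ≤ |((x j : ℤ) : ℝ)| := h1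
    _ ≤ ‖(fun j => ((x j : ℤ) : ℝ))‖ :=
      (norm_le_pi_norm (fun j => ((x j : ℤ) : ℝ)) j).trans_eq' (Real.norm_eq_abs _).symm

set_option maxHeartbeats 1000000 in
/-- Core lattice-sum estimate in the proof of Lemma 3.5: for `n > m·d_i`, there is `C > 0`
such that for all scaling factors `t_i > 0`,
`Σ_ξ (max_i t_i·‖ξ_i‖_∞)^(-n) ≤ C · ∏_i t_i^(-n/m)`, the sum being over tuples
`ξ ∈ ∏_i ℤ^{d_i}` with all blocks `ξ_i` nonzero. -/
theorem stmt_13 (m : ℕ) (hm : 1 ≤ m) (d : Fin m → ℕ) (hd : ∀ i, 1 ≤ d i)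
    (n : ℕ) (hn : ∀ i, m * d i < n) :
    ∃ C : ℝ, 0 < C ∧ ∀ t : Fin m → ℝ, (∀ i, 0 < t i) →
      Summable (fun ξ : {ξ : (i : Fin m) → Fin (d i) → ℤ // ∀ i, ξ i ≠ 0} =>
        (⨆ i, t i * ‖(fun j => ((ξ.1 i j : ℤ) : ℝ))‖) ^ (-(n : ℝ))) ∧
      ∑' ξ : {ξ : (i : Fin m) → Fin (d i) → ℤ // ∀ i, ξ i ≠ 0},
        (⨆ i, t i * ‖(fun j => ((ξ.1 i j : ℤ) : ℝ))‖) ^ (-(n : ℝ)) ≤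
        C * ∏ i, t i ^ (-(n : ℝ) / (m : ℝ)) := by
  haveI : NeZero m := ⟨by omega⟩
  haveI : Nonempty (Fin m) := ⟨⟨0, hm⟩⟩
  have hm0 : (0:ℝ) < m := by exact_mod_cast hm
  set k : ℝ := (n : ℝ) / m with hkdef
  have hk0 : 0 ≤ k := div_nonneg (Nat.cast_nonneg n) hm0.le
  have hk : ∀ i, (d i : ℝ) < k := by
    intro i
    rw [hkdef, lt_div_iff₀ hm0]
    exact_mod_cast (by rw [mul_comm]; exact hn i)
  have hkm : -k * m = -(n : ℝ) := by
    rw [hkdef]; field_simp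
  have hnk : -(n:ℝ)/(m:ℝ) = -k := by rw [hkdef]; ring
  set X : Fin m → Type := fun i => {x : Fin (d i) → ℤ // x ≠ 0} with hX
  set f : ∀ i, X i → ℝ := fun i x => ‖(fun j => ((x.1 j : ℤ) : ℝ))‖ ^ (-k) with hf
  have hf_nonneg : ∀ i x, 0 ≤ f i x := fun i x => Real.rpow_nonneg (norm_nonneg _) _
  have hf_sum : ∀ i, Summable (f i) := by
    intro i
    have := (aux2 (d i) k (hk i)).subtype {x | x ≠ 0}
    refine this.congr fun x => ?_
    simp only [Function.comp]
    rw [max_eq_right (norm_ge_one x.2)]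
  obtain ⟨hPS, hPT⟩ := aux_pi m X f hf_nonneg hf_sum
  set S : Fin m → ℝ := fun i => ∑' y, f i y with hS
  refine ⟨max 1 (∏ i, S i), lt_of_lt_of_le zero_lt_one (le_max_left _ _), ?_⟩
  intro t ht
  set e : {ξ : (i : Fin m) → Fin (d i) → ℤ // ∀ i, ξ i ≠ 0} ≃ ∀ i, X i :=
    Equiv.subtypePiEquivPi (p := fun i (x : Fin (d i) → ℤ) => x ≠ 0) with he
  have hHsum : Summable (fun ξ : {ξ : (i : Fin m) → Fin (d i) → ℤ // ∀ i, ξ i ≠ 0} =>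
      ∏ i, f i (e ξ i)) := by
    have h := (e.summable_iff (f := fun y : ∀ i, X i => ∏ i, f i (y i))).2 hPS
    exact h.congr fun ξ => rfl
  have hHtsum : (∑' ξ : {ξ : (i : Fin m) → Fin (d i) → ℤ // ∀ i, ξ i ≠ 0},
      ∏ i, f i (e ξ i)) = ∏ i, S i := by
    rw [← hPT]
    exact e.tsum_eq (fun y : ∀ i, X i => ∏ i, f i (y i))
  have hBeq : ∀ ξ : {ξ : (i : Fin m) → Fin (d i) → ℤ // ∀ i, ξ i ≠ 0},
      ∏ i, (t i * ‖(fun j => ((ξ.1 i j : ℤ) : ℝ))‖) ^ (-k)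
        = (∏ i, t i ^ (-k)) * ∏ i, f i (e ξ i) := by
    intro ξ
    rw [← Finset.prod_mul_distrib]
    exact Finset.prod_congr rfl fun i _ => Real.mul_rpow (ht i).le (norm_nonneg _)
  have hBsum : Summable (fun ξ : {ξ : (i : Fin m) → Fin (d i) → ℤ // ∀ i, ξ i ≠ 0} =>
      ∏ i, (t i * ‖(fun j => ((ξ.1 i j : ℤ) : ℝ))‖) ^ (-k)) :=
    ((hHsum.mul_left (∏ i, t i ^ (-k))).congr fun ξ => (hBeq ξ).symm)
  -- pointwise bound
  have hgpos : ∀ (ξ : {ξ : (i : Fin m) → Fin (d i) → ℤ // ∀ i, ξ i ≠ 0}) (i : Fin m),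
      0 < t i * ‖(fun j => ((ξ.1 i j : ℤ) : ℝ))‖ :=
    fun ξ i => mul_pos (ht i) (lt_of_lt_of_le one_pos (norm_ge_one (ξ.2 i)))
  have hle : ∀ (ξ : {ξ : (i : Fin m) → Fin (d i) → ℤ // ∀ i, ξ i ≠ 0}) (i : Fin m),
      t i * ‖(fun j => ((ξ.1 i j : ℤ) : ℝ))‖ ≤
        ⨆ i', t i' * ‖(fun j => ((ξ.1 i' j : ℤ) : ℝ))‖ :=
    fun ξ i => le_ciSup (f := fun i' => t i' * ‖(fun j => ((ξ.1 i' j : ℤ) : ℝ))‖) (Set.Finite.bddAbove (Set.finite_range _)) i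
  have hMpos : ∀ ξ : {ξ : (i : Fin m) → Fin (d i) → ℤ // ∀ i, ξ i ≠ 0},
      0 < ⨆ i, t i * ‖(fun j => ((ξ.1 i j : ℤ) : ℝ))‖ :=
    fun ξ => lt_of_lt_of_le (hgpos ξ (Classical.arbitrary _)) (hle ξ _)
  have hFB : ∀ ξ : {ξ : (i : Fin m) → Fin (d i) → ℤ // ∀ i, ξ i ≠ 0},
      (⨆ i, t i * ‖(fun j => ((ξ.1 i j : ℤ) : ℝ))‖) ^ (-(n : ℝ)) ≤
        ∏ i, (t i * ‖(fun j => ((ξ.1 i j : ℤ) : ℝ))‖) ^ (-k) := by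
    intro ξ
    set M : ℝ := ⨆ i, t i * ‖(fun j => ((ξ.1 i j : ℤ) : ℝ))‖ with hM
    have hM0 : 0 < M := hMpos ξ
    have step1 : M ^ (-(n : ℝ)) = ∏ _i : Fin m, M ^ (-k) := by
      rw [Finset.prod_const, Finset.card_univ, Fintype.card_fin, ← Real.rpow_natCast (M ^ (-k)) m,
        ← Real.rpow_mul hM0.le, hkm]
    rw [step1]
    refine Finset.prod_le_prod (fun i _ => Real.rpow_nonneg hM0.le _) fun i _ => ?_
    exact Real.rpow_le_rpow_of_nonpos (hgpos ξ i) (hle ξ i) (neg_nonpos.mpr hk0)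
  have hFsum : Summable (fun ξ : {ξ : (i : Fin m) → Fin (d i) → ℤ // ∀ i, ξ i ≠ 0} =>
      (⨆ i, t i * ‖(fun j => ((ξ.1 i j : ℤ) : ℝ))‖) ^ (-(n : ℝ))) :=
    hBsum.of_nonneg_of_le (fun ξ => Real.rpow_nonneg (hMpos ξ).le _) hFB
  refine ⟨hFsum, ?_⟩
  calc ∑' ξ : {ξ : (i : Fin m) → Fin (d i) → ℤ // ∀ i, ξ i ≠ 0},
        (⨆ i, t i * ‖(fun j => ((ξ.1 i j : ℤ) : ℝ))‖) ^ (-(n : ℝ))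
      ≤ ∑' ξ : {ξ : (i : Fin m) → Fin (d i) → ℤ // ∀ i, ξ i ≠ 0},
        ∏ i, (t i * ‖(fun j => ((ξ.1 i j : ℤ) : ℝ))‖) ^ (-k) :=
        Summable.tsum_le_tsum hFB hFsum hBsum
    _ = (∏ i, t i ^ (-k)) * ∏ i, S i := by
        rw [tsum_congr hBeq, tsum_mul_left, hHtsum]
    _ ≤ (∏ i, t i ^ (-k)) * max 1 (∏ i, S i) := by
        refine mul_le_mul_of_nonneg_left (le_max_right _ _) ?_
        exact Finset.prod_nonneg fun i _ => (Real.rpow_pos_of_pos (ht i) _).le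
    _ = max 1 (∏ i, S i) * ∏ i, t i ^ (-(n:ℝ)/(m:ℝ)) := by
        rw [mul_comm]
        congr 1
        exact Finset.prod_congr rfl fun i _ => by rw [hnk]
end

section
/- Let I be a finite set and G any function assigning to each ordered triple of ε-subsets of I an element of a commutative additive group. Then Σ_{J full} Σ_{J₁, J₂} Σ_{J₃, J₄} (−1)^{#(J ∖ (J₁ ∪ J₃))} · G( J ∖ (J₁ ∪ J₃), J₁ ∪ J₄, (J ∖ J₂) ∪ J₂^♯ ) = Σ_{(J', I')} (−1)^{#J'} · Σ_{K full} G(J', I', K), where: on the left, J ranges over all full ε-subsets of I, (J₁, J₂) over all pairs of disjoint ε-subsets contained in J, and (J₃, J₄) over all pairs with J₄ ⊆ J₃ ⊆ J₂; on the right, (J', I') ranges over all ordered pairs of disjoint ε-subsets of I and K over all full ε-subsets of I. -/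
/-! ε-subsets of a finite set `ι`, modelled as functions `ι → Option Bool`. -/

/-- The support of an ε-subset. -/
def epsSupp {ι : Type*} [Fintype ι] [DecidableEq ι] (J : ι → Option Bool) : Finset ι :=
  Finset.univ.filter fun i => (J i).isSome

/-- The cardinality `#J` of an ε-subset. -/
def epsCard {ι : Type*} [Fintype ι] [DecidableEq ι] (J : ι → Option Bool) : ℕ :=
  (epsSupp J).card

/-- An ε-subset is full if its support is all of `ι`. -/
abbrev epsFull {ι : Type*} (J : ι → Option Bool) : Prop := ∀ i, (J i).isSome

/-- `J^♯`: negate the Boolean value at every point of the support. -/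
def epsSharp {ι : Type*} (J : ι → Option Bool) : ι → Option Bool :=
  fun i => (J i).map Bool.not

/-- `J' ⊆ J`: the support of `J'` is contained in that of `J` and they agree there. -/
abbrev epsSub {ι : Type*} (J' J : ι → Option Bool) : Prop :=
  ∀ i, (J' i).isSome → J' i = J i

/-- Two ε-subsets are disjoint if their supports are disjoint. -/
abbrev epsDisj {ι : Type*} (J J' : ι → Option Bool) : Prop :=
  ∀ i, J i = none ∨ J' i = none

/-- Union of (disjoint) ε-subsets, defined pointwise. -/
def epsUnion {ι : Type*} (J J' : ι → Option Bool) : ι → Option Bool :=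
  fun i => (J i).orElse fun _ => J' i

/-- Difference `J ∖ J'` (for `J' ⊆ J`): agrees with `J` outside the support of `J'` and is
`none` on it. -/
def epsDiff {ι : Type*} (J J' : ι → Option Bool) : ι → Option Bool :=
  fun i => if (J' i).isSome then none else J i

private def psiJ (j' i' k : Option Bool) : Option Bool :=
  some ((j'.orElse fun _ => i').getD (!(k.getD true)))

private def psi1 (j' i' k : Option Bool) : Option Bool :=
  match j', i' with
  | none, some b => if k = some b then some b else none
  | _, _ => none

private def psi2 (j' i' k : Option Bool) : Option Bool :=
  match j', i' with
  | some b, _ => if k = some b then none else some b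
  | none, some b => if k = some b then none else some b
  | none, none => some (!(k.getD true))

private def psi3 (j' i' k : Option Bool) : Option Bool :=
  match j', i' with
  | none, some b => if k = some b then none else some b
  | none, none => some (!(k.getD true))
  | _, _ => none

private def psi4 (j' i' k : Option Bool) : Option Bool :=
  match j', i' with
  | none, some b => if k = some b then none else some b
  | _, _ => none

private def fA (j j1 j3 : Option Bool) : Option Bool :=
  if (j1.orElse fun _ => j3).isSome then none else j
private def fB (j1 j4 : Option Bool) : Option Bool := j1.orElse fun _ => j4
private def fC (j j2 : Option Bool) : Option Bool :=
  (if (j2).isSome then none else j).orElse fun _ => j2.map Bool.not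

set_option maxHeartbeats 4000000 in
set_option synthInstance.maxHeartbeats 2000000 in
set_option synthInstance.maxSize 2048 in
private lemma key1 : ∀ j j1 j2 j3 j4 : Option Bool,
    j.isSome = true → (j1 = none ∨ j2 = none) →
    (j1.isSome = true → j1 = j) → (j2.isSome = true → j2 = j) →
    (j4.isSome = true → j4 = j3) → (j3.isSome = true → j3 = j2) →
    (fA j j1 j3 = none ∨ fB j1 j4 = none) ∧
    (fC j j2).isSome = true ∧
    psiJ (fA j j1 j3) (fB j1 j4) (fC j j2) = j ∧
    psi1 (fA j j1 j3) (fB j1 j4) (fC j j2) = j1 ∧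
    psi2 (fA j j1 j3) (fB j1 j4) (fC j j2) = j2 ∧
    psi3 (fA j j1 j3) (fB j1 j4) (fC j j2) = j3 ∧
    psi4 (fA j j1 j3) (fB j1 j4) (fC j j2) = j4 := by decide

set_option maxHeartbeats 4000000 in
set_option synthInstance.maxHeartbeats 2000000 in
set_option synthInstance.maxSize 2048 in
private lemma key2 : ∀ j' i' k : Option Bool,
    (j' = none ∨ i' = none) → k.isSome = true →
    (psiJ j' i' k).isSome = true ∧
    (psi1 j' i' k = none ∨ psi2 j' i' k = none) ∧
    ((psi1 j' i' k).isSome = true → psi1 j' i' k = psiJ j' i' k) ∧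
    ((psi2 j' i' k).isSome = true → psi2 j' i' k = psiJ j' i' k) ∧
    ((psi4 j' i' k).isSome = true → psi4 j' i' k = psi3 j' i' k) ∧
    ((psi3 j' i' k).isSome = true → psi3 j' i' k = psi2 j' i' k) ∧
    fA (psiJ j' i' k) (psi1 j' i' k) (psi3 j' i' k) = j' ∧
    fB (psi1 j' i' k) (psi4 j' i' k) = i' ∧
    fC (psiJ j' i' k) (psi2 j' i' k) = k := by decide

/-- The combinatorial resummation identity from the proof of Lemma 6.10. -/
theorem stmt_14 (ι : Type*) [Fintype ι] [DecidableEq ι]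
    (M : Type*) [AddCommGroup M]
    (G : (ι → Option Bool) → (ι → Option Bool) → (ι → Option Bool) → M) :
    (∑ J ∈ Finset.univ.filter (fun J : ι → Option Bool => epsFull J),
      ∑ p ∈ Finset.univ.filter (fun p : (ι → Option Bool) × (ι → Option Bool) =>
          epsDisj p.1 p.2 ∧ epsSub p.1 J ∧ epsSub p.2 J),
        ∑ q ∈ Finset.univ.filter (fun q : (ι → Option Bool) × (ι → Option Bool) =>
            epsSub q.2 q.1 ∧ epsSub q.1 p.2),
          ((-1 : ℤ) ^ epsCard (epsDiff J (epsUnion p.1 q.1))) •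
            G (epsDiff J (epsUnion p.1 q.1)) (epsUnion p.1 q.2)
              (epsUnion (epsDiff J p.2) (epsSharp p.2)))
    = ∑ p ∈ Finset.univ.filter (fun p : (ι → Option Bool) × (ι → Option Bool) =>
          epsDisj p.1 p.2),
        ((-1 : ℤ) ^ epsCard p.1) •
          ∑ K ∈ Finset.univ.filter (fun K : ι → Option Bool => epsFull K), G p.1 p.2 K := by
  classical
  simp only [Finset.smul_sum]
  simp only [Finset.sum_sigma']
  refine Finset.sum_nbij'
    (fun x => ⟨(epsDiff x.1 (epsUnion x.2.1.1 x.2.2.1), epsUnion x.2.1.1 x.2.2.2),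
        epsUnion (epsDiff x.1 x.2.1.2) (epsSharp x.2.1.2)⟩)
    (fun y => ⟨(fun i => psiJ (y.1.1 i) (y.1.2 i) (y.2 i)),
      ⟨(fun i => psi1 (y.1.1 i) (y.1.2 i) (y.2 i), fun i => psi2 (y.1.1 i) (y.1.2 i) (y.2 i)),
       (fun i => psi3 (y.1.1 i) (y.1.2 i) (y.2 i), fun i => psi4 (y.1.1 i) (y.1.2 i) (y.2 i))⟩⟩)
    ?_ ?_ ?_ ?_ ?_
  · rintro ⟨J, ⟨⟨J₁, J₂⟩, ⟨J₃, J₄⟩⟩⟩ hx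
    simp only [Finset.mem_sigma, Finset.mem_filter, Finset.mem_univ, true_and] at hx ⊢
    obtain ⟨hfull, ⟨hd, h1, h2⟩, h43, h32⟩ := hx
    have h := fun i => key1 (J i) (J₁ i) (J₂ i) (J₃ i) (J₄ i) (hfull i) (hd i)
      (h1 i) (h2 i) (h43 i) (h32 i)
    exact ⟨fun i => (h i).1, fun i => (h i).2.1⟩
  · rintro ⟨⟨J', I'⟩, K⟩ hy
    simp only [Finset.mem_sigma, Finset.mem_filter, Finset.mem_univ, true_and] at hy ⊢
    obtain ⟨hd, hK⟩ := hy
    have h := fun i => key2 (J' i) (I' i) (K i) (hd i) (hK i)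
    exact ⟨fun i => (h i).1, ⟨fun i => (h i).2.1, fun i => (h i).2.2.1,
      fun i => (h i).2.2.2.1⟩, fun i => (h i).2.2.2.2.1, fun i => (h i).2.2.2.2.2.1⟩
  · rintro ⟨J, ⟨⟨J₁, J₂⟩, ⟨J₃, J₄⟩⟩⟩ hx
    simp only [Finset.mem_sigma, Finset.mem_filter, Finset.mem_univ, true_and] at hx
    obtain ⟨hfull, ⟨hd, h1, h2⟩, h43, h32⟩ := hx
    have h := fun i => key1 (J i) (J₁ i) (J₂ i) (J₃ i) (J₄ i) (hfull i) (hd i)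
      (h1 i) (h2 i) (h43 i) (h32 i)
    have eJ : (fun i => psiJ (epsDiff J (epsUnion J₁ J₃) i) (epsUnion J₁ J₄ i)
        (epsUnion (epsDiff J J₂) (epsSharp J₂) i)) = J := funext fun i => (h i).2.2.1
    have e1 : (fun i => psi1 (epsDiff J (epsUnion J₁ J₃) i) (epsUnion J₁ J₄ i)
        (epsUnion (epsDiff J J₂) (epsSharp J₂) i)) = J₁ := funext fun i => (h i).2.2.2.1
    have e2 : (fun i => psi2 (epsDiff J (epsUnion J₁ J₃) i) (epsUnion J₁ J₄ i)
        (epsUnion (epsDiff J J₂) (epsSharp J₂) i)) = J₂ := funext fun i => (h i).2.2.2.2.1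
    have e3 : (fun i => psi3 (epsDiff J (epsUnion J₁ J₃) i) (epsUnion J₁ J₄ i)
        (epsUnion (epsDiff J J₂) (epsSharp J₂) i)) = J₃ := funext fun i => (h i).2.2.2.2.2.1
    have e4 : (fun i => psi4 (epsDiff J (epsUnion J₁ J₃) i) (epsUnion J₁ J₄ i)
        (epsUnion (epsDiff J J₂) (epsSharp J₂) i)) = J₄ := funext fun i => (h i).2.2.2.2.2.2
    simp only [eJ, e1, e2, e3, e4]
  · rintro ⟨⟨J', I'⟩, K⟩ hy
    simp only [Finset.mem_sigma, Finset.mem_filter, Finset.mem_univ, true_and] at hy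
    obtain ⟨hd, hK⟩ := hy
    have h := fun i => key2 (J' i) (I' i) (K i) (hd i) (hK i)
    have eA : epsDiff (fun i => psiJ (J' i) (I' i) (K i))
        (epsUnion (fun i => psi1 (J' i) (I' i) (K i)) (fun i => psi3 (J' i) (I' i) (K i))) = J' :=
      funext fun i => (h i).2.2.2.2.2.2.1
    have eB : epsUnion (fun i => psi1 (J' i) (I' i) (K i))
        (fun i => psi4 (J' i) (I' i) (K i)) = I' :=
      funext fun i => (h i).2.2.2.2.2.2.2.1
    have eC : epsUnion (epsDiff (fun i => psiJ (J' i) (I' i) (K i))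
          (fun i => psi2 (J' i) (I' i) (K i)))
        (epsSharp (fun i => psi2 (J' i) (I' i) (K i))) = K :=
      funext fun i => (h i).2.2.2.2.2.2.2.2
    simp only [eA, eB, eC]
  · intro x _
    rfl
end
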